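/- Let X_n = Y₁ + ... + Y_n where the Y_i are independent Bernoulli random variables with P(Y_i = 1) = θ/(i-1+θ), θ > 0. Then conditionally on X_m = ℓ, for 0 < n ≤ m, P(X_{n-1} = k-1 | X_n = k) = S1(n-1,k-1)/S1(n,k) and P(X_{n-1} = k | X_n = k) = (n-1)·S1(n-1,k)/S1(n,k); in particular these quantities do not depend on θ. -/

import Mathlib

open Finset

/-- Unsigned Stirling numbers of the first kind. -/
def S1 : ℕ → ℕ → ℕ
  | 0, 0 => 1
  | 0, _ + 1 => 0
  | _ + 1, 0 => 0
  | n + 1, k + 1 => S1 n k + n * S1 n (k + 1)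

/-- Probability of an increment sequence `ω` for independent Bernoulli steps where the
`(i+1)`-st step has success probability `θ/(i+θ)`. -/
noncomputable def crpPathProb (m : ℕ) (θ : ℝ) (ω : Fin m → Bool) : ℝ :=
  ∏ i : Fin m, (if ω i then θ / ((i : ℕ) + θ) else 1 - θ / ((i : ℕ) + θ))

/-- Number of successes among the first `n` steps. -/
def crpWalk (m n : ℕ) (ω : Fin m → Bool) : ℕ :=
  (univ.filter fun i : Fin m => (i : ℕ) < n ∧ ω i = true).card

/-- Probability of an event. -/
noncomputable def crpPr (m : ℕ) (θ : ℝ) (A : Finset (Fin m → Bool)) : ℝ :=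
  ∑ ω ∈ A, crpPathProb m θ ω

/-!
Write `p i = θ / (i + θ)`. For an event `A` determined by the first `n` steps on which `X_n = k`,
`f m ℓ = P(A, X_m = ℓ)` satisfies, for `m ≥ n`, the recursion
`f (m + 1) (ℓ + 1) = p m * f m ℓ + (1 - p m) * f m (ℓ + 1)`, with initial values `f n ℓ`
proportional to `P(A)`. So `f m ℓ / P(X_n = k, X_m = ℓ) = P(A) / P(X_n = k)` (the Markov
property), which reduces the claim to `m = n`. There `P(X_n = k) = S1 n k * θ ^ k / (θ)^{↑n}` by
the Stirling recursion, and one more step of the chain gives the two numerators.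
-/

theorem S1_pos {n k : ℕ} (hk : 0 < k) (hkn : k ≤ n) : 0 < S1 n k := by
  induction n generalizing k with
  | zero => omega
  | succ n ih =>
    obtain ⟨_ | k, rfl⟩ : ∃ j, k = j + 1 := ⟨k - 1, by omega⟩
    · rcases n with _ | n
      · decide
      · exact Nat.add_pos_right _ (Nat.mul_pos n.succ_pos (ih one_pos n.succ_pos))
    · exact Nat.add_pos_left (ih k.succ_pos (by omega)) _

theorem crpWalk_snoc_of_le {m n : ℕ} (h : n ≤ m) (ω : Fin m → Bool) (b : Bool) :
    crpWalk (m + 1) n (Fin.snoc ω b) = crpWalk m n ω := by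
  simp only [crpWalk, card_filter, Fin.sum_univ_castSucc]
  simp [Nat.not_lt.mpr h]

theorem crpWalk_snoc_self {m : ℕ} (ω : Fin m → Bool) (b : Bool) :
    crpWalk (m + 1) (m + 1) (Fin.snoc ω b) = crpWalk m m ω + b.toNat := by
  simp only [crpWalk, card_filter, Fin.sum_univ_castSucc]
  cases b <;> simp

theorem crpPathProb_snoc (m : ℕ) (θ : ℝ) (ω : Fin m → Bool) (b : Bool) :
    crpPathProb (m + 1) θ (Fin.snoc ω b) =
      crpPathProb m θ ω * (if b then θ / (m + θ) else 1 - θ / (m + θ)) := by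
  simp [crpPathProb, Fin.prod_univ_castSucc]

theorem crpPathProb_nonneg {m : ℕ} {θ : ℝ} (hθ : 0 < θ) (ω : Fin m → Bool) :
    0 ≤ crpPathProb m θ ω := by
  refine prod_nonneg fun i _ => ?_
  have : θ / ((i : ℕ) + θ) ≤ 1 := div_le_one_of_le₀ (by simp) (by positivity)
  split <;> [positivity; linarith]

theorem crpPr_succ (m : ℕ) (θ : ℝ) (P : (Fin (m + 1) → Bool) → Prop) [DecidablePred P] :
    crpPr (m + 1) θ (univ.filter P) =
      crpPr m θ (univ.filter fun ω => P (Fin.snoc ω true)) * (θ / (m + θ)) +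
        crpPr m θ (univ.filter fun ω => P (Fin.snoc ω false)) * (1 - θ / (m + θ)) := by
  have snocEquiv_eq (b : Bool) (ω : Fin m → Bool) :
      Fin.snocEquiv (fun _ => Bool) (b, ω) = Fin.snoc ω b := rfl
  simp only [crpPr, sum_filter, sum_mul]
  rw [← (Fin.snocEquiv fun _ : Fin (m + 1) => Bool).sum_comp, Fintype.sum_prod_type,
    Fintype.sum_bool]
  congr 1 <;> simp [snocEquiv_eq, crpPathProb_snoc, ite_mul]

theorem crpPr_nonneg {m : ℕ} {θ : ℝ} (hθ : 0 < θ) (A : Finset (Fin m → Bool)) :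
    0 ≤ crpPr m θ A :=
  sum_nonneg fun ω _ => crpPathProb_nonneg hθ ω

theorem crpPr_walk_eq {θ : ℝ} (hθ : 0 < θ) (n k : ℕ) :
    crpPr n θ (univ.filter fun ω => crpWalk n n ω = k) =
      S1 n k * θ ^ k / (ascPochhammer ℝ n).eval θ := by
  induction n generalizing k with
  | zero => cases k <;> simp [crpPr, crpPathProb, crpWalk, S1]
  | succ n ih =>
    have hA := (ascPochhammer_pos n θ hθ).ne'
    have hnθ : (n : ℝ) + θ ≠ 0 := by positivity
    rw [crpPr_succ, ascPochhammer_succ_eval]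
    simp only [crpWalk_snoc_self, Bool.toNat_true, Bool.toNat_false, add_zero]
    rcases k with _ | k
    · rw [ih]
      rcases n with _ | n <;> simp [crpPr, S1, hθ.ne']
    · simp only [Nat.add_right_cancel_iff, ih, S1]
      field_simp
      push_cast
      ring

theorem crpPr_walk_and_walk_succ_add_one (θ : ℝ) (n k : ℕ) :
    crpPr (n + 1) θ
        (univ.filter fun ω => crpWalk (n + 1) n ω = k ∧ crpWalk (n + 1) (n + 1) ω = k + 1) =
      crpPr n θ (univ.filter fun ω => crpWalk n n ω = k) * (θ / (n + θ)) := by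
  have hstep (ω : Fin n → Bool) : ¬(crpWalk n n ω = k ∧ crpWalk n n ω = k + 1) := by omega
  rw [crpPr_succ]
  simp [crpWalk_snoc_of_le, crpWalk_snoc_self, hstep, crpPr]

theorem crpPr_walk_and_walk_succ_self (θ : ℝ) (n k : ℕ) :
    crpPr (n + 1) θ
        (univ.filter fun ω => crpWalk (n + 1) n ω = k ∧ crpWalk (n + 1) (n + 1) ω = k) =
      crpPr n θ (univ.filter fun ω => crpWalk n n ω = k) * (1 - θ / (n + θ)) := by
  have hstay (ω : Fin n → Bool) : ¬(crpWalk n n ω = k ∧ crpWalk n n ω + 1 = k) := by omega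
  rw [crpPr_succ]
  simp [crpWalk_snoc_of_le, crpWalk_snoc_self, hstay, crpPr]

theorem crpPr_walk_and_walk_succ_add_one_div {θ : ℝ} (hθ : 0 < θ) (n k : ℕ) :
    crpPr (n + 1) θ
        (univ.filter fun ω => crpWalk (n + 1) n ω = k ∧ crpWalk (n + 1) (n + 1) ω = k + 1) /
        crpPr (n + 1) θ (univ.filter fun ω => crpWalk (n + 1) (n + 1) ω = k + 1) =
      S1 n k / S1 (n + 1) (k + 1) := by
  have hA := (ascPochhammer_pos n θ hθ).ne'
  have hnθ : (n : ℝ) + θ ≠ 0 := by positivity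
  rw [crpPr_walk_and_walk_succ_add_one, crpPr_walk_eq hθ, crpPr_walk_eq hθ,
    ascPochhammer_succ_eval]
  field_simp
  ring

theorem crpPr_walk_and_walk_succ_self_div {θ : ℝ} (hθ : 0 < θ) (n k : ℕ) :
    crpPr (n + 1) θ
        (univ.filter fun ω => crpWalk (n + 1) n ω = k ∧ crpWalk (n + 1) (n + 1) ω = k) /
        crpPr (n + 1) θ (univ.filter fun ω => crpWalk (n + 1) (n + 1) ω = k) =
      n * S1 n k / S1 (n + 1) k := by
  have hA := (ascPochhammer_pos n θ hθ).ne'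
  have hnθ : (n : ℝ) + θ ≠ 0 := by positivity
  rw [crpPr_walk_and_walk_succ_self, crpPr_walk_eq hθ, crpPr_walk_eq hθ,
    ascPochhammer_succ_eval]
  field_simp
  ring

noncomputable def jointPr (m : ℕ) (θ : ℝ) (C : (Fin m → Bool) → Prop) [DecidablePred C]
    (ℓ : ℕ) : ℝ :=
  crpPr m θ (univ.filter fun ω => C ω ∧ crpWalk m m ω = ℓ)

section Recursion

variable {m : ℕ} (θ : ℝ) {C : (Fin (m + 1) → Bool) → Prop} {C' : (Fin m → Bool) → Prop}
  [DecidablePred C] [DecidablePred C'] (hC : ∀ ω b, C (Fin.snoc ω b) ↔ C' ω)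
include hC

theorem jointPr_succ_zero : jointPr (m + 1) θ C 0 = jointPr m θ C' 0 * (1 - θ / (m + θ)) := by
  rw [jointPr, crpPr_succ]
  simp [hC, crpWalk_snoc_self, crpPr, jointPr]

theorem jointPr_succ_succ (ℓ : ℕ) :
    jointPr (m + 1) θ C (ℓ + 1) =
      jointPr m θ C' ℓ * (θ / (m + θ)) + jointPr m θ C' (ℓ + 1) * (1 - θ / (m + θ)) := by
  simp [jointPr, crpPr_succ, hC, crpWalk_snoc_self]

end Recursion

/-- The family `C m` of events on `m` steps sees, for `m ≥ n`, only the first `n` steps. -/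
def DependsOnFirst (n : ℕ) (C : ∀ m, (Fin m → Bool) → Prop) : Prop :=
  ∀ m, n ≤ m → ∀ ω b, C (m + 1) (Fin.snoc ω b) ↔ C m ω

theorem dependsOnFirst_walk_eq {j n : ℕ} (hj : j ≤ n) (i : ℕ) :
    DependsOnFirst n fun m ω => crpWalk m j ω = i :=
  fun _ hm ω b => by simp only [crpWalk_snoc_of_le (hj.trans hm)]

theorem DependsOnFirst.and {n : ℕ} {C D : ∀ m, (Fin m → Bool) → Prop}
    (hC : DependsOnFirst n C) (hD : DependsOnFirst n D) :
    DependsOnFirst n fun m ω => C m ω ∧ D m ω :=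
  fun m hm ω b => and_congr (hC m hm ω b) (hD m hm ω b)

section Families

variable {θ : ℝ} {n : ℕ} {C D : ∀ m, (Fin m → Bool) → Prop}
  [∀ m, DecidablePred (C m)] [∀ m, DecidablePred (D m)]

theorem mul_jointPr_eq_of_le (hC : DependsOnFirst n C) (hD : DependsOnFirst n D) {a b : ℝ}
    (hbase : ∀ ℓ, a * jointPr n θ (C n) ℓ = b * jointPr n θ (D n) ℓ) {m : ℕ}
    (hm : n ≤ m) (ℓ : ℕ) : a * jointPr m θ (C m) ℓ = b * jointPr m θ (D m) ℓ := by
  induction m, hm using Nat.le_induction generalizing ℓ with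
  | base => exact hbase ℓ
  | succ m hm ih =>
    rcases ℓ with _ | ℓ
    · rw [jointPr_succ_zero θ (hC m hm), jointPr_succ_zero θ (hD m hm)]
      linear_combination (1 - θ / (m + θ)) * ih 0
    · rw [jointPr_succ_succ θ (hC m hm), jointPr_succ_succ θ (hD m hm)]
      linear_combination (θ / (m + θ)) * ih ℓ + (1 - θ / (m + θ)) * ih (ℓ + 1)

theorem jointPr_eq_ite {k : ℕ} {E : (Fin n → Bool) → Prop} [DecidablePred E]
    (hE : ∀ ω, E ω → crpWalk n n ω = k) (ℓ : ℕ) :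
    jointPr n θ E ℓ = if ℓ = k then crpPr n θ (univ.filter E) else 0 := by
  split_ifs with hℓ
  · subst hℓ
    exact congrArg _ (filter_congr fun ω _ => ⟨And.left, fun h => ⟨h, hE ω h⟩⟩)
  · rw [jointPr, filter_false_of_mem fun ω _ h => hℓ (h.2.symm.trans (hE ω h.1))]
    simp [crpPr]

theorem crpPr_condIndep_past_future (hC : DependsOnFirst n C) {m : ℕ} (hm : n ≤ m)
    (k ℓ : ℕ) :
    crpPr m θ (univ.filter fun ω => C m ω ∧ crpWalk m n ω = k ∧ crpWalk m m ω = ℓ) *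
        crpPr n θ (univ.filter fun ω => crpWalk n n ω = k) =
      crpPr m θ (univ.filter fun ω => crpWalk m n ω = k ∧ crpWalk m m ω = ℓ) *
        crpPr n θ (univ.filter fun ω => C n ω ∧ crpWalk n n ω = k) := by
  have hX : DependsOnFirst n fun m ω => crpWalk m n ω = k := dependsOnFirst_walk_eq le_rfl k
  have hbase (j : ℕ) :
      crpPr n θ (univ.filter fun ω => crpWalk n n ω = k) *
          jointPr n θ (fun ω => C n ω ∧ crpWalk n n ω = k) j =
        crpPr n θ (univ.filter fun ω => C n ω ∧ crpWalk n n ω = k) *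
          jointPr n θ (fun ω => crpWalk n n ω = k) j := by
    rw [jointPr_eq_ite (fun ω h => h.2), jointPr_eq_ite (fun ω h => h)]
    split_ifs <;> ring
  have := mul_jointPr_eq_of_le (hC.and hX) hX hbase hm ℓ
  simpa only [jointPr, and_assoc, mul_comm] using this

theorem jointPr_pos (hθ : 0 < θ) (hn : 0 < n) (hC : DependsOnFirst n C) {k : ℕ}
    (hk : 0 < jointPr n θ (C n) k) {m : ℕ} (hm : n ≤ m) {ℓ : ℕ} (hkℓ : k ≤ ℓ)
    (hℓ : ℓ - k ≤ m - n) : 0 < jointPr m θ (C m) ℓ := by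
  induction m, hm using Nat.le_induction generalizing ℓ with
  | base =>
    obtain rfl : ℓ = k := by omega
    exact hk
  | succ m hm ih =>
    have hp : 0 < θ / (m + θ) := by positivity
    have hq : 0 < 1 - θ / (m + θ) := by
      have : (1 : ℝ) ≤ m := by exact_mod_cast hn.trans_le hm
      rw [sub_pos, div_lt_one (by positivity)]
      linarith
    have hnonneg (j : ℕ) : 0 ≤ jointPr m θ (C m) j := crpPr_nonneg hθ _
    rcases ℓ with _ | ℓ
    · rw [jointPr_succ_zero θ (hC m hm)]
      exact mul_pos (ih hkℓ (by omega)) hq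
    · rw [jointPr_succ_succ θ (hC m hm)]
      by_cases h : ℓ + 1 - k ≤ m - n
      · exact add_pos_of_nonneg_of_pos (mul_nonneg (hnonneg _) hp.le)
          (mul_pos (ih hkℓ h) hq)
      · exact add_pos_of_pos_of_nonneg (mul_pos (ih (by omega) (by omega)) hp)
          (mul_nonneg (hnonneg _) hq.le)

end Families

theorem crpPr_walk_pos {θ : ℝ} (hθ : 0 < θ) {n k : ℕ} (hk : 0 < k) (hkn : k ≤ n) :
    0 < crpPr n θ (univ.filter fun ω => crpWalk n n ω = k) := by
  have := S1_pos hk hkn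
  have := ascPochhammer_pos n θ hθ
  rw [crpPr_walk_eq hθ]
  positivity

theorem crpPr_past_div_eq {θ : ℝ} (hθ : 0 < θ) {n k m ℓ : ℕ}
    {C : ∀ m, (Fin m → Bool) → Prop} [∀ m, DecidablePred (C m)] (hC : DependsOnFirst n C)
    (hk : 0 < k) (hkn : k ≤ n) (hnm : n ≤ m) (hkℓ : k ≤ ℓ) (hℓ : ℓ - k ≤ m - n) :
    crpPr m θ (univ.filter fun ω => C m ω ∧ crpWalk m n ω = k ∧ crpWalk m m ω = ℓ) /
        crpPr m θ (univ.filter fun ω => crpWalk m n ω = k ∧ crpWalk m m ω = ℓ) =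
      crpPr n θ (univ.filter fun ω => C n ω ∧ crpWalk n n ω = k) /
        crpPr n θ (univ.filter fun ω => crpWalk n n ω = k) := by
  have hpresent := crpPr_walk_pos hθ hk hkn
  have hfuture :
      0 < crpPr m θ (univ.filter fun ω => crpWalk m n ω = k ∧ crpWalk m m ω = ℓ) :=
    jointPr_pos hθ (hk.trans_le hkn) (dependsOnFirst_walk_eq le_rfl k)
      (by rwa [jointPr_eq_ite (fun _ h => h), if_pos rfl]) hnm hkℓ hℓ
  rw [div_eq_div_iff hfuture.ne' hpresent.ne', crpPr_condIndep_past_future hC hnm, mul_comm]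

theorem crp_reversed_transitions_general (θ : ℝ) (hθ : 0 < θ) (m ℓ n k : ℕ)
    (hk : 0 < k) (hkn : k ≤ n) (hnm : n ≤ m)
    (hkℓ : k ≤ ℓ) (hadm : ℓ - k ≤ m - n) :
    crpPr m θ (univ.filter fun ω =>
        crpWalk m (n - 1) ω = k - 1 ∧ crpWalk m n ω = k ∧ crpWalk m m ω = ℓ) /
        crpPr m θ (univ.filter fun ω => crpWalk m n ω = k ∧ crpWalk m m ω = ℓ)
      = (S1 (n - 1) (k - 1) : ℝ) / (S1 n k) ∧
    crpPr m θ (univ.filter fun ω =>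
        crpWalk m (n - 1) ω = k ∧ crpWalk m n ω = k ∧ crpWalk m m ω = ℓ) /
        crpPr m θ (univ.filter fun ω => crpWalk m n ω = k ∧ crpWalk m m ω = ℓ)
      = ((n : ℝ) - 1) * (S1 (n - 1) k) / (S1 n k) := by
  have hpast (j : ℕ) := dependsOnFirst_walk_eq (Nat.sub_le n 1) j
  rw [crpPr_past_div_eq hθ (hpast _) hk hkn hnm hkℓ hadm,
    crpPr_past_div_eq hθ (hpast _) hk hkn hnm hkℓ hadm]
  obtain ⟨n, rfl⟩ : ∃ n', n = n' + 1 := ⟨n - 1, by omega⟩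
  obtain ⟨k, rfl⟩ : ∃ k', k = k' + 1 := ⟨k - 1, by omega⟩
  simp only [Nat.add_sub_cancel, Nat.cast_add_one, add_sub_cancel_right]
  exact ⟨crpPr_walk_and_walk_succ_add_one_div hθ n k,
    crpPr_walk_and_walk_succ_self_div hθ n (k + 1)⟩

/-- Conditionally on `X_m = ℓ`, the time-reversed Chinese-restaurant table-count chain has
transition probabilities given by the Pascal formula for unsigned Stirling numbers of the
first kind; in particular they do not depend on `θ`. -/
theorem crp_reversed_transitions (θ : ℝ) (hθ : 0 < θ) (m ℓ n k : ℕ)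
    (hk : 0 < k) (hkn : k ≤ n) (hn : 0 < n) (hnm : n ≤ m)
    (hkℓ : k ≤ ℓ) (hℓm : ℓ ≤ m) (hadm : ℓ - k ≤ m - n) :
    crpPr m θ (univ.filter fun ω =>
        crpWalk m (n - 1) ω = k - 1 ∧ crpWalk m n ω = k ∧ crpWalk m m ω = ℓ) /
        crpPr m θ (univ.filter fun ω => crpWalk m n ω = k ∧ crpWalk m m ω = ℓ)
      = (S1 (n - 1) (k - 1) : ℝ) / (S1 n k) ∧
    crpPr m θ (univ.filter fun ω =>
        crpWalk m (n - 1) ω = k ∧ crpWalk m n ω = k ∧ crpWalk m m ω = ℓ) /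
        crpPr m θ (univ.filter fun ω => crpWalk m n ω = k ∧ crpWalk m m ω = ℓ)
      = ((n : ℝ) - 1) * (S1 (n - 1) k) / (S1 n k) :=
  crp_reversed_transitions_general θ hθ m ℓ n k hk hkn hnm hkℓ hadm
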